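/- For every x ∈ T⁷ with α(x) = x: the second coordinate of β(x) differs from x₂, the first coordinate of γ(x) differs from x₁, and the first coordinate of β(γ(x)) differs from x₁. Since β, γ and β∘γ commute with α and preserve Fix(α), and the connected components of Fix(α) are the 16 three-tori T_ε = {x : (x₁,x₂,x₃,x₄) = ε}, ε ∈ {0,½}⁴, it follows that each of β, γ, β∘γ maps every component T_ε to a component different from T_ε; i.e. the group ⟨β, γ⟩ ≅ (ℤ/2ℤ)² acts freely on the set of 16 three-tori fixed by α. -/
import Mathlib


/-- The 7-torus `T⁷ = (ℝ/ℤ)⁷`. -/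
abbrev T7 := Fin 7 → AddCircle (1 : ℝ)

/-- The class of `½` in `ℝ/ℤ`. -/
noncomputable def half : AddCircle (1 : ℝ) := ((1 / 2 : ℝ) : AddCircle (1 : ℝ))

/-- `α(x) = (−x₁, −x₂, −x₃, −x₄, x₅, x₆, x₇)`. -/
noncomputable def α (x : T7) : T7 := ![-x 0, -x 1, -x 2, -x 3, x 4, x 5, x 6]

/-- `β(x) = (−x₁, ½−x₂, x₃, x₄, −x₅, −x₆, −x₇)`. -/
noncomputable def β (x : T7) : T7 := ![-x 0, half - x 1, x 2, x 3, -x 4, -x 5, -x 6]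

/-- `γ(x) = (½−x₁, x₂, ½−x₃, x₄, −x₅, x₆, −x₇)`. -/
noncomputable def γ (x : T7) : T7 := ![half - x 0, x 1, half - x 2, x 3, -x 4, x 5, -x 6]

/-- The 3-torus `T_ε = {x ∈ T⁷ : x_i = ε_i for i = 1,2,3,4}`. -/
def Tset (ε : Fin 4 → AddCircle (1 : ℝ)) : Set T7 :=
  {x | ∀ i : Fin 4, x (Fin.castLE (by norm_num) i) = ε i}

/-- The index set `{0, ½}⁴` of the 16 fixed 3-tori of `α`. -/
noncomputable def Eps : Set (Fin 4 → AddCircle (1 : ℝ)) :=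
  {ε | ∀ i, ε i = 0 ∨ ε i = half}

lemma half_ne_zero' : half ≠ 0 := by
  simp only [half, ne_eq, AddCircle.coe_eq_zero_iff]
  rintro ⟨n, hn⟩
  have h : (n : ℝ) = 1/2 := by simpa using hn
  have h2 : (2 * n : ℤ) = 1 := by exact_mod_cast (by linarith : (2 * n : ℝ) = 1)
  omega

lemma neg_half : -half = half := by
  have : half + half = 0 := by
    simp only [half, ← AddCircle.coe_add]
    norm_num
  exact neg_eq_of_add_eq_zero_left this

lemma key {a : AddCircle (1 : ℝ)} (ha : -a = a) : half - a ≠ a := by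
  intro h
  have haa : a + a = 0 := by nth_rewrite 1 [← ha]; exact neg_add_cancel a
  rw [sub_eq_iff_eq_add, haa] at h
  exact half_ne_zero' h

lemma key2 {a : AddCircle (1 : ℝ)} : a - half ≠ a := by
  intro h
  exact half_ne_zero' (sub_eq_self.mp h)

/-- For every fixed point `x` of `α`: `β` moves the second coordinate, `γ` moves the first
coordinate, and `β∘γ` moves the first coordinate.  Consequently each of `β`, `γ`, `β∘γ`
maps each of the 16 three-tori `T_ε ⊆ Fix(α)`, `ε ∈ {0,½}⁴`, off itself, i.e. the group
`⟨β, γ⟩ ≅ (ℤ/2ℤ)²` acts freely on the set of 16 three-tori fixed by `α`. -/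
theorem stmt7 :
    (∀ x : T7, α x = x →
      β x 1 ≠ x 1 ∧ γ x 0 ≠ x 0 ∧ β (γ x) 0 ≠ x 0) ∧
    (∀ ε ∈ Eps, ∀ x ∈ Tset ε,
      β x ∉ Tset ε ∧ γ x ∉ Tset ε ∧ β (γ x) ∉ Tset ε) := by
  constructor
  · intro x hx
    have h0 : -x 0 = x 0 := by
      have := congrFun hx 0; simpa [α] using this
    have h1 : -x 1 = x 1 := by
      have := congrFun hx 1; simpa [α] using this
    refine ⟨?_, ?_, ?_⟩
    · simpa [β] using key h1
    · simpa [γ] using key h0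
    · have : β (γ x) 0 = x 0 - half := by
        simp [β, γ]
      rw [this]; exact key2
  · intro ε hε x hx
    have hneg : ∀ i : Fin 4, -x (Fin.castLE (by norm_num) i) = x (Fin.castLE (by norm_num) i) := by
      intro i
      rw [hx i]
      rcases hε i with h | h <;> rw [h]
      · simp
      · exact neg_half
    have h0 : -x 0 = x 0 := hneg 0
    have h1 : -x 1 = x 1 := hneg 1
    refine ⟨?_, ?_, ?_⟩
    · intro hmem
      have := (hmem 1).trans (hx 1).symm
      exact key h1 (by simpa [β] using this)
    · intro hmem
      have := (hmem 0).trans (hx 0).symm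
      exact key h0 (by simpa [γ] using this)
    · intro hmem
      have h := (hmem 0).trans (hx 0).symm
      have hb : β (γ x) 0 = x 0 - half := by
        simp [β, γ]
      exact key2 (hb ▸ h)
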